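/- Let U be a finite-dimensional real normed vector space with dual U*, V = U×U*, and let S : U×U → ℝ be C¹. Suppose φ : V → V is a bijection generated by S, i.e. for all p,q ∈ U and p*,q* ∈ U*: φ(p,p*) = (q,q*) if and only if p* = D₁S(p,q) and q* = −D₂S(p,q). Let h : U → U be a C¹ diffeomorphism and define Ψ : V → V by Ψ(u,u*) = (h(u), −u* ∘ (Dh(u))⁻¹). Then Ψ⁻¹ ∘ φ ∘ Ψ = φ⁻¹ if and only if there exists a constant c ∈ ℝ with S(h(ū), h(u)) = S(u,ū) + c for all (u,ū) ∈ U×U. (The paper's Proposition: the anti-symplectic lift of h is a reversal symmetry of φ if and only if S is invariant under the reversal action of h, up to a constant.) -/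

import Mathlib

/-- Partial Fréchet derivative of `S : U × U → ℝ` with respect to the first argument. -/
noncomputable def D1 {U : Type} [NormedAddCommGroup U] [NormedSpace ℝ U]
    (S : U × U → ℝ) (p q : U) : U →L[ℝ] ℝ :=
  fderiv ℝ (fun w => S (w, q)) p

/-- Partial Fréchet derivative of `S : U × U → ℝ` with respect to the second argument. -/
noncomputable def D2 {U : Type} [NormedAddCommGroup U] [NormedSpace ℝ U]
    (S : U × U → ℝ) (p q : U) : U →L[ℝ] ℝ :=
  fderiv ℝ (fun w => S (p, w)) q

/-!
Since `Ψ` is invertible, `Ψ⁻¹ ∘ φ ∘ Ψ = φ⁻¹` means `φ ∘ Ψ = Ψ ∘ φ⁻¹`. Every point of `V` is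
`φ(p, D₁S(p,q)) = (q, −D₂S(p,q))` for some `p, q`, and the generating relation turns the
commutation at this point into `D₁S(p,q) = D₂S(h q, h p) ∘ Dh(p)` and
`D₂S(p,q) = D₁S(h q, h p) ∘ Dh(q)`. By the chain rule these say that the two partial derivatives
of `(u, ū) ↦ S(h ū, h u)` agree with those of `S`, i.e. the difference of the two functions is
constant along every horizontal and every vertical slice of `U × U`, hence constant.
-/

open Function

theorem Function.Bijective.invFun_comp_eq_iff {α β γ : Type*} [Nonempty α] {f : α → β}
    (hf : Bijective f) {g : γ → β} {k : γ → α} : invFun f ∘ g = k ↔ g = f ∘ k := by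
  constructor
  · rintro rfl
    rw [← comp_assoc, (rightInverse_invFun hf.2).comp_eq_id, id_comp]
  · rintro rfl
    rw [← comp_assoc, invFun_comp hf.1, id_comp]

section General

variable {𝕜 E F G : Type*} [NontriviallyNormedField 𝕜] [NormedAddCommGroup E] [NormedSpace 𝕜 E]
  [NormedAddCommGroup F] [NormedSpace 𝕜 F] [NormedAddCommGroup G] [NormedSpace 𝕜 G]

theorem fderiv_comp_fderiv_of_leftInverse {f : E → F} {g : F → E} (hgf : LeftInverse g f)
    {x : E} (hg : DifferentiableAt 𝕜 g (f x)) (hf : DifferentiableAt 𝕜 f x) :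
    (fderiv 𝕜 g (f x)).comp (fderiv 𝕜 f x) = ContinuousLinearMap.id 𝕜 E := by
  rw [← fderiv_comp x hg hf, hgf.comp_eq_id, fderiv_id]

theorem ContinuousLinearMap.comp_eq_iff_eq_comp {L : E →L[𝕜] F} {A : F →L[𝕜] E}
    (hLA : L.comp A = ContinuousLinearMap.id 𝕜 F) (hAL : A.comp L = ContinuousLinearMap.id 𝕜 E)
    (f : F →L[𝕜] G) (g : E →L[𝕜] G) : f.comp L = g ↔ f = g.comp A := by
  constructor
  · rintro rfl
    rw [ContinuousLinearMap.comp_assoc, hLA, ContinuousLinearMap.comp_id]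
  · rintro rfl
    rw [ContinuousLinearMap.comp_assoc, hAL, ContinuousLinearMap.comp_id]

end General

section Reversal

variable {U : Type} [NormedAddCommGroup U] [NormedSpace ℝ U]

theorem D1_comp_swap {S : U × U → ℝ} {h : U → U} {p q : U}
    (hS : DifferentiableAt ℝ S (h q, h p)) (hh : DifferentiableAt ℝ h p) :
    D1 (fun z => S (h z.2, h z.1)) p q = (D2 S (h q) (h p)).comp (fderiv ℝ h p) :=
  fderiv_comp (g := fun z => S (h q, z)) p
    (hS.comp (h p) ((differentiableAt_const _).prodMk differentiableAt_id)) hh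

theorem D2_comp_swap {S : U × U → ℝ} {h : U → U} {p q : U}
    (hS : DifferentiableAt ℝ S (h q, h p)) (hh : DifferentiableAt ℝ h q) :
    D2 (fun z => S (h z.2, h z.1)) p q = (D1 S (h q) (h p)).comp (fderiv ℝ h q) :=
  fderiv_comp (g := fun z => S (z, h p)) q
    (hS.comp (h q) (differentiableAt_id.prodMk (differentiableAt_const _))) hh

theorem exists_add_const_iff_D1_eq_and_D2_eq {S T : U × U → ℝ} (hS : Differentiable ℝ S)
    (hT : Differentiable ℝ T) :
    (∃ c : ℝ, ∀ p q, T (p, q) = S (p, q) + c) ↔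
      ∀ p q, D1 T p q = D1 S p q ∧ D2 T p q = D2 S p q := by
  constructor
  · rintro ⟨c, hc⟩ p q
    simp only [D1, D2, hc, fderiv_add_const, and_self]
  · intro hD
    set F : U × U → ℝ := fun z => T z - S z
    have hF1 : ∀ p q, F (p, q) = F (0, q) := fun p q =>
      is_const_of_fderiv_eq_zero (f := fun w => F (w, q)) (by fun_prop) (fun w => by
        rw [fderiv_fun_sub (f := fun w => T (w, q)) (by fun_prop) (by fun_prop)]
        exact sub_eq_zero.mpr (hD w q).1) p 0
    have hF2 : ∀ q, F (0, q) = F (0, 0) := fun q =>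
      is_const_of_fderiv_eq_zero (f := fun w => F (0, w)) (by fun_prop) (fun w => by
        rw [fderiv_fun_sub (f := fun w => T (0, w)) (by fun_prop) (by fun_prop)]
        exact sub_eq_zero.mpr (hD 0 w).2) q 0
    refine ⟨F (0, 0), fun p q => ?_⟩
    have hpq := (hF1 p q).trans (hF2 q)
    simp only [F] at hpq
    linarith

/-- With `L u = (Dh u)⁻¹` this is the anti-symplectic lift `(u, u*) ↦ (h u, −u* ∘ (Dh u)⁻¹)`. -/
def negCotangentLift (h : U → U) (L : U → U →L[ℝ] U) (x : U × (U →L[ℝ] ℝ)) :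
    U × (U →L[ℝ] ℝ) :=
  (h x.1, -(x.2.comp (L x.1)))

theorem negCotangentLift_bijective {h : U → U} (hh : Bijective h) {L A : U → U →L[ℝ] U}
    (hLA : ∀ u, (L u).comp (A u) = ContinuousLinearMap.id ℝ U)
    (hAL : ∀ u, (A u).comp (L u) = ContinuousLinearMap.id ℝ U) :
    Bijective (negCotangentLift h L) := by
  refine ⟨?_, ?_⟩
  · rintro ⟨u, us⟩ ⟨v, vs⟩ he
    simp only [negCotangentLift, Prod.mk.injEq, neg_inj] at he
    obtain ⟨huv, hs⟩ := he
    obtain rfl := hh.1 huv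
    rw [ContinuousLinearMap.comp_eq_iff_eq_comp (hLA u) (hAL u),
      ContinuousLinearMap.comp_assoc, hLA u, ContinuousLinearMap.comp_id] at hs
    rw [hs]
  · rintro ⟨v, vs⟩
    obtain ⟨u, rfl⟩ := hh.2 v
    refine ⟨(u, -(vs.comp (A u))), ?_⟩
    simp only [negCotangentLift, ContinuousLinearMap.neg_comp, neg_neg,
      ContinuousLinearMap.comp_assoc, hAL u, ContinuousLinearMap.comp_id]

def IsGeneratedBy (φ : U × (U →L[ℝ] ℝ) ≃ U × (U →L[ℝ] ℝ)) (S : U × U → ℝ) : Prop :=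
  ∀ (p q : U) (ps qs : U →L[ℝ] ℝ), φ (p, ps) = (q, qs) ↔ ps = D1 S p q ∧ qs = -D2 S p q

variable {φ : U × (U →L[ℝ] ℝ) ≃ U × (U →L[ℝ] ℝ)} {S : U × U → ℝ}

theorem IsGeneratedBy.symm_apply (hφ : IsGeneratedBy φ S) (p q : U) :
    φ.symm (q, -D2 S p q) = (p, D1 S p q) :=
  φ.symm_apply_eq.mpr ((hφ p q _ _).mpr ⟨rfl, rfl⟩).symm

theorem IsGeneratedBy.forall_iff (hφ : IsGeneratedBy φ S) {P : U × (U →L[ℝ] ℝ) → Prop} :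
    (∀ x, P x) ↔ ∀ p q, P (q, -D2 S p q) := by
  refine ⟨fun hP p q => hP _, fun hP x => ?_⟩
  rcases hx : φ.symm x with ⟨p, ps⟩
  obtain ⟨-, hx2⟩ := (hφ p x.1 ps x.2).mp (by rw [← hx, φ.apply_symm_apply])
  have hx' : x = (x.1, -D2 S p x.1) := Prod.ext rfl hx2
  exact hx' ▸ hP p x.1

theorem IsGeneratedBy.comp_negCotangentLift_eq_iff (hφ : IsGeneratedBy φ S) (h : U → U)
    {L A : U → U →L[ℝ] U} (hLA : ∀ u, (L u).comp (A u) = ContinuousLinearMap.id ℝ U)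
    (hAL : ∀ u, (A u).comp (L u) = ContinuousLinearMap.id ℝ U) :
    φ ∘ negCotangentLift h L = negCotangentLift h L ∘ φ.symm ↔
      ∀ p q, D1 S p q = (D2 S (h q) (h p)).comp (A p) ∧
        D2 S p q = (D1 S (h q) (h p)).comp (A q) := by
  rw [funext_iff, hφ.forall_iff]
  refine forall₂_congr fun p q => ?_
  rw [comp_apply, comp_apply, hφ.symm_apply]
  simp only [negCotangentLift, ContinuousLinearMap.neg_comp, neg_neg]
  rw [hφ, neg_inj, ContinuousLinearMap.comp_eq_iff_eq_comp (hLA q) (hAL q),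
    ContinuousLinearMap.comp_eq_iff_eq_comp (hLA p) (hAL p), and_comm]

end Reversal

theorem stmt_13_general (U : Type) [NormedAddCommGroup U] [NormedSpace ℝ U]
    (S : U × U → ℝ) (hS : ContDiff ℝ 1 S)
    (φ : (U × (U →L[ℝ] ℝ)) ≃ (U × (U →L[ℝ] ℝ)))
    (hgen : ∀ (p q : U) (pstar qstar : U →L[ℝ] ℝ),
      φ (p, pstar) = (q, qstar) ↔ pstar = D1 S p q ∧ qstar = -D2 S p q)
    (h hinv : U → U)
    (hli : Function.LeftInverse hinv h) (hri : Function.RightInverse hinv h)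
    (hC1 : ContDiff ℝ 1 h) (hinvC1 : ContDiff ℝ 1 hinv)
    (Ψ : U × (U →L[ℝ] ℝ) → U × (U →L[ℝ] ℝ))
    (hΨ : ∀ (u : U) (us : U →L[ℝ] ℝ),
      Ψ (u, us) = (h u, -(us.comp (fderiv ℝ hinv (h u))))) :
    (Function.invFun Ψ ∘ ⇑φ ∘ Ψ = ⇑φ.symm) ↔
      ∃ c : ℝ, ∀ u ub : U, S (h ub, h u) = S (u, ub) + c := by
  have hSd : Differentiable ℝ S := hS.differentiable one_ne_zero
  have hhd : Differentiable ℝ h := hC1.differentiable one_ne_zero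
  have hinvd : Differentiable ℝ hinv := hinvC1.differentiable one_ne_zero
  have hLA (u : U) : (fderiv ℝ hinv (h u)).comp (fderiv ℝ h u) = ContinuousLinearMap.id ℝ U :=
    fderiv_comp_fderiv_of_leftInverse hli (hinvd _) (hhd u)
  have hAL (u : U) : (fderiv ℝ h u).comp (fderiv ℝ hinv (h u)) = ContinuousLinearMap.id ℝ U := by
    simpa only [hli u] using fderiv_comp_fderiv_of_leftInverse hri (hhd _) (hinvd (h u))
  obtain rfl : Ψ = negCotangentLift h fun u => fderiv ℝ hinv (h u) :=
    funext fun x => hΨ x.1 x.2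
  rw [(negCotangentLift_bijective ⟨hli.injective, hri.surjective⟩ hLA hAL).invFun_comp_eq_iff,
    IsGeneratedBy.comp_negCotangentLift_eq_iff hgen h hLA hAL,
    exists_add_const_iff_D1_eq_and_D2_eq hSd (T := fun z => S (h z.2, h z.1)) (by fun_prop)]
  refine forall₂_congr fun p q => ?_
  rw [D1_comp_swap (hSd _) (hhd p), D2_comp_swap (hSd _) (hhd q), eq_comm,
    eq_comm (a := D2 S p q)]

/-- the anti-symplectic lift `Ψ(u,u*) = (h(u), −u* ∘ (Dh(u))⁻¹)` of a C¹
diffeomorphism `h` is a reversal symmetry of the bijective symplectic map `φ` generated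
by `S` if and only if `S` is invariant (up to a constant) under the reversal action
`(u,ū) ↦ (h(ū), h(u))`. Here `(Dh(u))⁻¹ = D(h⁻¹)(h(u))`. -/
theorem stmt_13 (U : Type) [NormedAddCommGroup U] [NormedSpace ℝ U] [FiniteDimensional ℝ U]
    (S : U × U → ℝ) (hS : ContDiff ℝ 1 S)
    (φ : (U × (U →L[ℝ] ℝ)) ≃ (U × (U →L[ℝ] ℝ)))
    (hgen : ∀ (p q : U) (pstar qstar : U →L[ℝ] ℝ),
      φ (p, pstar) = (q, qstar) ↔ pstar = D1 S p q ∧ qstar = -D2 S p q)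
    (h hinv : U → U)
    (hli : Function.LeftInverse hinv h) (hri : Function.RightInverse hinv h)
    (hC1 : ContDiff ℝ 1 h) (hinvC1 : ContDiff ℝ 1 hinv)
    (Ψ : U × (U →L[ℝ] ℝ) → U × (U →L[ℝ] ℝ))
    (hΨ : ∀ (u : U) (us : U →L[ℝ] ℝ),
      Ψ (u, us) = (h u, -(us.comp (fderiv ℝ hinv (h u))))) :
    (Function.invFun Ψ ∘ ⇑φ ∘ Ψ = ⇑φ.symm) ↔
      ∃ c : ℝ, ∀ u ub : U, S (h ub, h u) = S (u, ub) + c :=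
  stmt_13_general U S hS φ hgen h hinv hli hri hC1 hinvC1 Ψ hΨ
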